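/- For n ≥ 3, with weights as in the terminal construction (a_0 = (s_{n-1}-1)/2 - 1, a_1 = (s_{n-1}-1)/2, a_i = (s_{n-1}-1)(s_{n-1}-2)/(2 s_{n-i}) for 2 ≤ i ≤ n-1, a_n = ((s_{n-1}-1)(s_{n-1}-2)/2 - 1)/2), one has a_0 + a_1 + ... + a_n = (s_{n-1}-1)^2/2 - 1. -/

import Mathlib

/-!
Put `m = n - 1`, `s = s_m` and `P = s - 1 = s_0 ⋯ s_{m-1}`. Clearing denominators in the Egyptian fraction
identity `∑_{k < m} 1/s_k = 1 - 1/P` gives `∑_{k < m} P/s_k = s - 2`; since `s_0 = 2`, every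
`P/s_k` with `k ≥ 1` is even, so `∑_{k=1}^{m-1} P/(2 s_k) = (s - 3)/4`, and in particular `s ≡ 3 mod 4`.
Writing `s = 4r + 3`, every weight is then an explicit polynomial in `r` and both sides equal
`8r² + 8r + 1`.
-/

def sylvester : ℕ → ℕ
  | 0 => 2
  | n + 1 => sylvester n * (sylvester n - 1) + 1

open Finset

theorem two_le_sylvester : ∀ m, 2 ≤ sylvester m
  | 0 => le_rfl
  | m + 1 => by
    have := two_le_sylvester m
    show 2 ≤ sylvester m * (sylvester m - 1) + 1
    nlinarith [Nat.sub_add_cancel (show 1 ≤ sylvester m by omega)]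

theorem sylvester_succ_sub_one (m : ℕ) :
    sylvester (m + 1) - 1 = sylvester m * (sylvester m - 1) :=
  Nat.add_sub_cancel _ _

theorem sylvester_sub_one_eq_prod : ∀ m, sylvester m - 1 = ∏ j ∈ range m, sylvester j
  | 0 => rfl
  | m + 1 => by
    rw [prod_range_succ, ← sylvester_sub_one_eq_prod m, sylvester_succ_sub_one, mul_comm]

theorem sylvester_dvd_sylvester_sub_one {k m : ℕ} (h : k < m) :
    sylvester k ∣ sylvester m - 1 := by
  rw [sylvester_sub_one_eq_prod]
  exact dvd_prod_of_mem _ (mem_range.2 h)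

theorem two_mul_sylvester_dvd_sylvester_sub_one {k m : ℕ} (hk : 1 ≤ k) (h : k < m) :
    2 * sylvester k ∣ sylvester m - 1 := by
  have hsub : ({0, k} : Finset ℕ) ⊆ range m := by
    intro x hx
    rw [mem_insert, mem_singleton] at hx
    rw [mem_range]
    omega
  rw [sylvester_sub_one_eq_prod]
  simpa [prod_pair (show 0 ≠ k by omega), sylvester] using prod_dvd_prod_of_subset _ _ sylvester hsub

theorem sum_sylvester_sub_one_div_sylvester :
    ∀ m, ∑ k ∈ range m, (sylvester m - 1) / sylvester k = sylvester m - 2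
  | 0 => rfl
  | m + 1 => by
    have hs := two_le_sylvester m
    have hterm : ∀ k ∈ range m, (sylvester (m + 1) - 1) / sylvester k
        = sylvester m * ((sylvester m - 1) / sylvester k) := fun k hk => by
      rw [sylvester_succ_sub_one,
        Nat.mul_div_assoc _ (sylvester_dvd_sylvester_sub_one (mem_range.1 hk))]
    have hlast : (sylvester (m + 1) - 1) / sylvester m = sylvester m - 1 := by
      rw [sylvester_succ_sub_one, Nat.mul_div_cancel_left _ (by omega)]
    rw [sum_range_succ, sum_congr rfl hterm, ← mul_sum, sum_sylvester_sub_one_div_sylvester m,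
      hlast]
    rw [show sylvester (m + 1) - 2 = sylvester (m + 1) - 1 - 1 by omega, sylvester_succ_sub_one]
    obtain ⟨t, ht⟩ : ∃ t, sylvester m = t + 2 := ⟨sylvester m - 2, by omega⟩
    rw [ht, Nat.add_sub_cancel, show t + 2 - 1 = t + 1 by omega]
    ring_nf
    omega

theorem four_mul_sum_sylvester_sub_one_div_add_three {m : ℕ} (hm : 1 ≤ m) :
    4 * ∑ k ∈ Ico 1 m, (sylvester m - 1) / (2 * sylvester k) + 3 = sylvester m := by
  have hrange : range m = insert 0 (Ico 1 m) := by
    ext x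
    simp only [mem_range, mem_insert, mem_Ico]
    omega
  have hdouble : ∀ k ∈ Ico 1 m,
      (sylvester m - 1) / sylvester k = 2 * ((sylvester m - 1) / (2 * sylvester k)) := by
    intro k hk
    rw [mem_Ico] at hk
    obtain ⟨t, ht⟩ := two_mul_sylvester_dvd_sylvester_sub_one hk.1 hk.2
    have hpos : 0 < sylvester k := by have := two_le_sylvester k; omega
    rw [ht, Nat.mul_div_cancel_left t (by omega), mul_right_comm, Nat.mul_div_cancel _ hpos]
  have hsum := sum_sylvester_sub_one_div_sylvester m
  rw [hrange, sum_insert (by simp), sum_congr rfl hdouble, ← mul_sum,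
    show sylvester 0 = 2 from rfl] at hsum
  have heven : 2 ∣ sylvester m - 1 := sylvester_dvd_sylvester_sub_one hm
  have := two_le_sylvester m
  omega

theorem terminal_weights_sum (n : ℕ) (hn : 3 ≤ n) :
    ((sylvester (n - 1) - 1) / 2 - 1) + (sylvester (n - 1) - 1) / 2
      + (∑ i ∈ Finset.Icc 2 (n - 1),
          (sylvester (n - 1) - 1) * (sylvester (n - 1) - 2) / (2 * sylvester (n - i)))
      + ((sylvester (n - 1) - 1) * (sylvester (n - 1) - 2) / 2 - 1) / 2
      = (sylvester (n - 1) - 1) ^ 2 / 2 - 1 := by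
  obtain ⟨m, rfl⟩ : ∃ m, n = m + 1 := ⟨n - 1, by omega⟩
  rw [Nat.add_sub_cancel]
  have hweights : ∑ i ∈ Icc 2 m,
        (sylvester m - 1) * (sylvester m - 2) / (2 * sylvester (m + 1 - i))
      = (sylvester m - 2) * ∑ k ∈ Ico 1 m, (sylvester m - 1) / (2 * sylvester k) := by
    rw [← Ico_add_one_right_eq_Icc, sum_Ico_reflect (fun k => (sylvester m - 1) * (sylvester m - 2)
      / (2 * sylvester k)) _ (by omega), mul_sum]
    refine sum_congr (by congr 1; omega) fun k hk => ?_
    rw [mem_Ico] at hk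
    rw [mul_comm, Nat.mul_div_assoc _ (two_mul_sylvester_dvd_sylvester_sub_one hk.1 hk.2)]
  have hs := four_mul_sum_sylvester_sub_one_div_add_three (show 1 ≤ m by omega)
  rw [hweights]
  generalize ∑ k ∈ Ico 1 m, (sylvester m - 1) / (2 * sylvester k) = r at hs ⊢
  rw [← hs, show 4 * r + 3 - 1 = 4 * r + 2 by omega, show 4 * r + 3 - 2 = 4 * r + 1 by omega]
  have h1 : (4 * r + 1) * r = 4 * (r * r) + r := by ring
  have h2 : (4 * r + 2) * (4 * r + 1) = 16 * (r * r) + 12 * r + 2 := by ring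
  have h3 : (4 * r + 2) ^ 2 = 16 * (r * r) + 16 * r + 4 := by ring
  omega
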